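/- arXiv:2412.07291 — 2 statements merged into one kernel-verified Lean document; each statement's English description precedes it below -/
import Mathlib

section
/- Let S ⊆ (Fin n → ℝ) be finite, P = convexHull ℝ S, a, E : Fin n → ℝ, and let V be a cost-optimal extreme point of P. Assume the set N₊ of edge-neighbors Z of V with a·Z > a·V is nonempty, and let Z ∈ N₊ attain the minimal gradient: (E·Z − E·V)/(a·Z − a·V) ≤ (E·Z' − E·V)/(a·Z' − a·V) for all Z' ∈ N₊. Then for every r ∈ [0, 1] the point p(r) = V + r • (Z − V) is cost-optimal: for every q ∈ P with a·q = a·p(r) one has E·p(r) ≤ E·q. -/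
/-!
With `λ = (E·Z − E·V)/(a·Z − a·V)`, it suffices that `V` minimises the Lagrangian `f = E − λ a`
on `P ∩ {a·p ≥ a·V}`: `f` is constant on `[V, Z]`, and cost-optimality of `V + r(Z − V)` follows
by linearity. If some `p` there had `f p < f V`, then `V` would not maximise `−f` on `P`, so `−f`
increases along some edge `[V, z]`. If `a·z > a·V` this contradicts the minimal gradient of `Z`;
otherwise the convex set `{f < f V} ∩ P` contains `z` and `p`, so it meets the level set
`a·x = a·V`, against the cost-optimality of `V`.

The improving edge comes from the vertex figure: if `c` exposes `V`, the directions
`(c V − c s)⁻¹ • (s − V)` lie in the hyperplane `c = −1`, and an extreme point of their convex hull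
at which `−f` is maximal spans an edge at `V`.
-/

/-- The dot product `a·p = ∑ i, a i * p i`. -/
def dot {n : ℕ} (a p : Fin n → ℝ) : ℝ := ∑ i, a i * p i

/-- `Z` is an edge-neighbor of `V` in `P`: a vertex of `P` distinct from `V` such that the
closed segment `[V, Z]` is an edge (a nonempty exposed face of affine dimension 1) of `P`. -/
def EdgeNeighbor {n : ℕ} (P : Set (Fin n → ℝ)) (V Z : Fin n → ℝ) : Prop :=
  Z ∈ Set.extremePoints ℝ P ∧ Z ≠ V ∧
    (segment ℝ V Z).Nonempty ∧ IsExposed ℝ P (segment ℝ V Z) ∧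
    Module.finrank ℝ ↥(vectorSpan ℝ (segment ℝ V Z)) = 1

open Set

section Polytope

variable {E : Type*} [NormedAddCommGroup E] [NormedSpace ℝ E]

theorem exists_lt_of_mem_extremePoints_convexHull {S : Set E} (hS : S.Finite) {V : E}
    (hV : V ∈ (convexHull ℝ S).extremePoints ℝ) :
    ∃ c : E →L[ℝ] ℝ, ∀ s ∈ S, s ≠ V → c s < c V := by
  have hnot : V ∉ convexHull ℝ (S \ {V}) := fun hmem =>
    ((convex_convexHull ℝ S).mem_extremePoints_iff_mem_sdiff_convexHull_sdiff.1 hV).2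
      (convexHull_mono (sdiff_subset_sdiff_left (subset_convexHull ℝ S)) hmem)
  obtain ⟨c, u, hcu, huV⟩ := geometric_hahn_banach_closed_point (convex_convexHull ℝ _)
    (hS.sdiff.isCompact_convexHull ℝ).isClosed hnot
  exact ⟨c, fun s hs hsV => (hcu s (subset_convexHull ℝ _ ⟨hs, hsV⟩)).trans huV⟩

theorem isCompact_segment (x y : E) : IsCompact (segment ℝ x y) :=
  convexHull_pair (𝕜 := ℝ) x y ▸ (toFinite {x, y}).isCompact_convexHull ℝ

theorem right_mem_extremePoints_segment (x y : E) : y ∈ (segment ℝ x y).extremePoints ℝ := by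
  by_contra hy
  have hext : (segment ℝ x y).extremePoints ℝ ⊆ {x} := by
    intro w hw
    rw [← convexHull_pair (𝕜 := ℝ)] at hw
    rcases extremePoints_convexHull_subset hw with rfl | rfl
    · rfl
    · exact absurd (convexHull_pair (𝕜 := ℝ) x w ▸ hw) hy
  have hsub : segment ℝ x y ⊆ {x} := by
    rw [← closure_convexHull_extremePoints (isCompact_segment x y) (convex_segment x y)]
    exact closure_minimal (convexHull_min hext (convex_singleton x)) isClosed_singleton
  obtain rfl : y = x := hsub (right_mem_segment ℝ x y)
  simp [segment_same] at hy

theorem IsCompact.exists_mem_extremePoints_ge {K : Set E} (hK : IsCompact K) (g : E →L[ℝ] ℝ)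
    {x : E} (hx : x ∈ K) : ∃ y ∈ K.extremePoints ℝ, g x ≤ g y := by
  have hexp : IsExposed ℝ K (g.toExposed K) := ContinuousLinearMap.toExposed.isExposed
  obtain ⟨m, hmK, hm⟩ := hK.exists_isMaxOn ⟨x, hx⟩ g.continuous.continuousOn
  obtain ⟨y, hy⟩ := (hexp.isCompact hK).extremePoints_nonempty ⟨m, hmK, hm⟩
  exact ⟨y, hexp.isExtreme.extremePoints_subset_extremePoints hy, hy.1.2 x hx⟩

theorem isExposed_segment_convexHull {S : Set E} (hS : S.Finite) {V z : E} (hV : V ∈ S)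
    (hz : z ∈ S) (W : E →L[ℝ] ℝ) (hle : ∀ s ∈ S, W s ≤ W V) (hzV : W z = W V)
    (hseg : ∀ s ∈ S, W s = W V → s ∈ segment ℝ V z) :
    IsExposed ℝ (convexHull ℝ S) (segment ℝ V z) := by
  intro _
  refine ⟨W, Subset.antisymm (fun x hx => ⟨?_, fun y hy => ?_⟩) ?_⟩
  · exact (convex_convexHull ℝ S).segment_subset (subset_convexHull ℝ S hV)
      (subset_convexHull ℝ S hz) hx
  · have hWx : W x = W V :=
      (convex_hyperplane W.toLinearMap.isLinear (W V)).segment_subset rfl hzV hx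
    exact hWx ▸ convexHull_min hle (convex_halfSpace_le W.toLinearMap.isLinear (W V)) hy
  · have hexp : IsExposed ℝ (convexHull ℝ S) (W.toExposed (convexHull ℝ S)) :=
      ContinuousLinearMap.toExposed.isExposed
    change W.toExposed _ ⊆ _
    rw [← closure_convexHull_extremePoints (hexp.isCompact (hS.isCompact_convexHull ℝ))
      (hexp.convex (convex_convexHull ℝ S))]
    refine closure_minimal (convexHull_min ?_ (convex_segment V z)) ?_
    · intro x hx
      have hxS := extremePoints_convexHull_subset
        (hexp.isExtreme.extremePoints_subset_extremePoints hx)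
      exact hseg x hxS (le_antisymm (hle x hxS) (hx.1.2 V (subset_convexHull ℝ S hV)))
    · exact (isCompact_segment V z).isClosed

noncomputable def vertexDir (c : E →L[ℝ] ℝ) (V s : E) : E := (c V - c s)⁻¹ • (s - V)

theorem apply_vertexDir (c g : E →L[ℝ] ℝ) (V s : E) :
    g (vertexDir c V s) = (c V - c s)⁻¹ * (g s - g V) := by
  simp [vertexDir]

theorem sub_eq_smul_vertexDir {c : E →L[ℝ] ℝ} {V s : E} (h : c s < c V) :
    s - V = (c V - c s) • vertexDir c V s := by
  rw [vertexDir, smul_smul, mul_inv_cancel₀ (sub_pos.2 h).ne', one_smul]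

theorem mem_segment_of_vertexDir_eq {c : E →L[ℝ] ℝ} {V s z : E} (hs : c s < c V)
    (hz : c z < c V) (hzs : c z ≤ c s) (hsz : vertexDir c V s = vertexDir c V z) :
    s ∈ segment ℝ V z := by
  have hτz := sub_pos.2 hz
  rw [segment_eq_image']
  refine ⟨(c V - c s) / (c V - c z), ⟨div_nonneg (sub_pos.2 hs).le hτz.le,
    (div_le_one hτz).2 (by linarith)⟩, ?_⟩
  dsimp only
  rw [sub_eq_smul_vertexDir hz, ← hsz, smul_smul, div_mul_cancel₀ _ hτz.ne',
    ← sub_eq_smul_vertexDir hs, add_sub_cancel]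

theorem exists_isExposed_segment_of_vertexDir_mem_extremePoints {S : Set E} (hS : S.Finite) {V : E}
    (hV : V ∈ S) {c : E →L[ℝ] ℝ} (hc : ∀ s ∈ S, s ≠ V → c s < c V) {z₀ : E}
    (hz₀ : z₀ ∈ S) (hz₀V : z₀ ≠ V)
    (hext : vertexDir c V z₀ ∈
      (convexHull ℝ (vertexDir c V '' (S \ {V}))).extremePoints ℝ) :
    ∃ z ∈ S, z ≠ V ∧ vertexDir c V z = vertexDir c V z₀ ∧
      IsExposed ℝ (convexHull ℝ S) (segment ℝ V z) := by
  set y₀ := vertexDir c V z₀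
  obtain ⟨h, hh⟩ := exists_lt_of_mem_extremePoints_convexHull (hS.sdiff.image _) hext
  obtain ⟨z, ⟨hzS, hzV, hzy⟩, hzmin⟩ :=
    exists_min_image {s ∈ S | s ≠ V ∧ vertexDir c V s = y₀} c (hS.subset fun s hs => hs.1)
      ⟨z₀, hz₀, hz₀V, rfl⟩
  -- on `S`, `W = W V` exactly along the ray `V + ℝ≥0 • y₀`, as `c = -1` on all directions
  set W := h + h y₀ • c
  have hW : ∀ s ∈ S, s ≠ V → W s - W V = (c V - c s) * (h (vertexDir c V s) - h y₀) := by
    intro s hs hsV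
    have hcdir : c (vertexDir c V s) = -1 := by
      have := sub_pos.2 (hc s hs hsV)
      rw [apply_vertexDir]
      field_simp
      ring
    rw [← map_sub, sub_eq_smul_vertexDir (hc s hs hsV), map_smul, smul_eq_mul]
    simp only [W, add_apply, smul_apply, hcdir]
    ring
  have hdir : ∀ s ∈ S, s ≠ V → h (vertexDir c V s) ≤ h y₀ := fun s hs hsV =>
    (eq_or_ne (vertexDir c V s) y₀).elim (fun e => (congrArg h e).le)
      fun hne => (hh _ ⟨s, ⟨hs, hsV⟩, rfl⟩ hne).le
  refine ⟨z, hzS, hzV, hzy, isExposed_segment_convexHull hS hV hzS W ?_ ?_ ?_⟩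
  · intro s hs
    rcases eq_or_ne s V with rfl | hsV
    · rfl
    have := hW s hs hsV
    nlinarith [hc s hs hsV, hdir s hs hsV]
  · simpa [hzy, sub_eq_zero] using hW z hzS hzV
  · intro s hs hWs
    rcases eq_or_ne s V with rfl | hsV
    · exact left_mem_segment ℝ s z
    have hsy : vertexDir c V s = y₀ := by
      by_contra hne
      have := hW s hs hsV
      nlinarith [hc s hs hsV, hh _ ⟨s, ⟨hs, hsV⟩, rfl⟩ hne]
    exact mem_segment_of_vertexDir_eq (hc s hs hsV) (hc z hzS hzV) (hzmin s ⟨hs, hsV, hsy⟩)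
      (hsy.trans hzy.symm)

theorem exists_isExposed_segment_of_lt {S : Set E} (hS : S.Finite) {V : E}
    (hV : V ∈ (convexHull ℝ S).extremePoints ℝ) (g : E →L[ℝ] ℝ) {p : E}
    (hp : p ∈ convexHull ℝ S) (hgp : g V < g p) :
    ∃ z ∈ S, z ≠ V ∧ g V < g z ∧ IsExposed ℝ (convexHull ℝ S) (segment ℝ V z) := by
  have hVS : V ∈ S := extremePoints_convexHull_subset hV
  obtain ⟨c, hc⟩ := exists_lt_of_mem_extremePoints_convexHull hS hV
  obtain ⟨s, hsS, hps⟩ :=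
    (g.toLinearMap.convexOn convex_univ).exists_ge_of_mem_convexHull (subset_univ S) hp
  have hgs : g V < g s := hgp.trans_le hps
  have hsV : s ≠ V := by rintro rfl; exact hgs.false
  have hK := ((hS.sdiff (t := {V})).image (vertexDir c V)).isCompact_convexHull ℝ
  obtain ⟨y, hy, hsy⟩ := hK.exists_mem_extremePoints_ge g
    (subset_convexHull ℝ _ (mem_image_of_mem _ (mem_sdiff_singleton.2 ⟨hsS, hsV⟩)))
  obtain ⟨z₀, ⟨hz₀S, hz₀V⟩, rfl⟩ := extremePoints_convexHull_subset hy
  obtain ⟨z, hzS, hzV, hzy, hexp⟩ :=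
    exists_isExposed_segment_of_vertexDir_mem_extremePoints hS hVS hc hz₀S
      (by simpa using hz₀V) hy
  refine ⟨z, hzS, hzV, ?_, hexp⟩
  have hgys : 0 < g (vertexDir c V s) := by
    rw [apply_vertexDir]
    exact mul_pos (inv_pos.2 (sub_pos.2 (hc s hsS hsV))) (sub_pos.2 hgs)
  have hgyz : 0 < g (vertexDir c V z) := hzy ▸ hgys.trans_le hsy
  rw [apply_vertexDir] at hgyz
  exact sub_pos.1 (pos_of_mul_pos_right hgyz (inv_pos.2 (sub_pos.2 (hc z hzS hzV))).le)

end Polytope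

section EdgeNeighbor

variable {n : ℕ}

noncomputable def dotCLM (a : Fin n → ℝ) : (Fin n → ℝ) →L[ℝ] ℝ :=
  LinearMap.toContinuousLinearMap (dotProductBilin ℝ ℝ a)

@[simp]
theorem dotCLM_apply (a p : Fin n → ℝ) : dotCLM a p = dot a p := rfl

theorem dot_add_smul_sub (b V Z : Fin n → ℝ) (r : ℝ) :
    dot b (V + r • (Z - V)) = dot b V + r * (dot b Z - dot b V) := by
  simp only [← dotCLM_apply, map_add, map_smul, map_sub, smul_eq_mul]

theorem edgeNeighbor_of_isExposed_segment {P : Set (Fin n → ℝ)} {V Z : Fin n → ℝ}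
    (hZV : Z ≠ V) (hexp : IsExposed ℝ P (segment ℝ V Z)) : EdgeNeighbor P V Z :=
  ⟨hexp.isExtreme.extremePoints_subset_extremePoints (right_mem_extremePoints_segment V Z), hZV,
    ⟨V, left_mem_segment ℝ V Z⟩, hexp,
    by rw [vectorSpan_segment]; exact finrank_span_singleton (vsub_ne_zero.2 hZV)⟩

theorem le_of_forall_edgeNeighbor_le {S : Set (Fin n → ℝ)} (hS : S.Finite) {V : Fin n → ℝ}
    (hV : V ∈ (convexHull ℝ S).extremePoints ℝ) (α f : (Fin n → ℝ) →L[ℝ] ℝ)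
    (hlevel : ∀ p ∈ convexHull ℝ S, α p = α V → f V ≤ f p)
    (hedge : ∀ z, EdgeNeighbor (convexHull ℝ S) V z → α V < α z → f V ≤ f z)
    {p : Fin n → ℝ} (hp : p ∈ convexHull ℝ S) (hαp : α V ≤ α p) : f V ≤ f p := by
  by_contra! hfp
  obtain ⟨z, hzS, hzV, hfz, hexp⟩ :=
    exists_isExposed_segment_of_lt hS hV (-f) hp (by simpa using hfp)
  rw [neg_apply, neg_apply, neg_lt_neg_iff] at hfz
  rcases lt_or_ge (α V) (α z) with hαz | hαz
  · exact (hedge z (edgeNeighbor_of_isExposed_segment hzV hexp) hαz).not_gt hfz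
  -- `{x ∈ P | f x < f V}` is connected and meets both sides of the level set of `α` through `V`
  have hconv := (convex_convexHull ℝ S).inter (convex_halfSpace_lt f.toLinearMap.isLinear (f V))
  obtain ⟨w, ⟨hwP, hfw⟩, hαw⟩ := hconv.isPreconnected.intermediate_value
    ⟨subset_convexHull ℝ S hzS, hfz⟩ ⟨hp, hfp⟩ α.continuous.continuousOn ⟨hαz, hαp⟩
  exact (hlevel w hwP hαw).not_gt hfw

end EdgeNeighbor

theorem stmt_8_general (n : ℕ) (S : Set (Fin n → ℝ)) (hS : S.Finite)
    (P : Set (Fin n → ℝ)) (hP : P = convexHull ℝ S)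
    (a E : Fin n → ℝ)
    (V : Fin n → ℝ) (hV : V ∈ Set.extremePoints ℝ P)
    (hopt : ∀ p ∈ P, dot a p = dot a V → dot E V ≤ dot E p)
    (Z : Fin n → ℝ) (hZa : dot a V < dot a Z)
    (hZmin : ∀ Z', EdgeNeighbor P V Z' → dot a V < dot a Z' →
      (dot E Z - dot E V) / (dot a Z - dot a V) ≤
        (dot E Z' - dot E V) / (dot a Z' - dot a V)) :
    ∀ r ∈ Set.Icc (0 : ℝ) 1, ∀ q ∈ P,
      dot a q = dot a (V + r • (Z - V)) → dot E (V + r • (Z - V)) ≤ dot E q := by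
  subst hP
  intro r hr q hq haq
  have hΔ : 0 < dot a Z - dot a V := sub_pos.2 hZa
  set lam := (dot E Z - dot E V) / (dot a Z - dot a V)
  have hlam : lam * (dot a Z - dot a V) = dot E Z - dot E V := div_mul_cancel₀ _ hΔ.ne'
  set f := dotCLM E - lam • dotCLM a
  have hf : ∀ x, f x = dot E x - lam * dot a x := fun x => rfl
  have hlevel : ∀ p ∈ convexHull ℝ S, dot a p = dot a V → f V ≤ f p := fun p hp hap => by
    rw [hf, hf, hap]
    linarith [hopt p hp hap]
  have hedge : ∀ z, EdgeNeighbor (convexHull ℝ S) V z → dot a V < dot a z → f V ≤ f z :=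
    fun z hz haz => by
      rw [hf, hf]
      linarith [(le_div_iff₀ (sub_pos.2 haz)).1 (hZmin z hz haz)]
  rw [dot_add_smul_sub] at haq ⊢
  have haVq : dot a V ≤ dot a q := haq ▸ le_add_of_nonneg_right (mul_nonneg hr.1 hΔ.le)
  have hmin := le_of_forall_edgeNeighbor_le hS hV (dotCLM a) f hlevel hedge hq haVq
  have hslope : r * (dot E Z - dot E V) = lam * (dot a q - dot a V) := by rw [haq, ← hlam]; ring
  linarith [hf V, hf q]

/-- At a cost-optimal vertex `V`, moving along the edge towards the
target-increasing edge-neighbor `Z` of minimal gradient stays cost-optimal: every point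
`V + r • (Z − V)`, `r ∈ [0,1]`, has minimal cost among points of `P` with the same target. -/
theorem stmt_8 (n : ℕ) (S : Set (Fin n → ℝ)) (hS : S.Finite)
    (P : Set (Fin n → ℝ)) (hP : P = convexHull ℝ S)
    (a E : Fin n → ℝ)
    (V : Fin n → ℝ) (hV : V ∈ Set.extremePoints ℝ P)
    (hopt : ∀ p ∈ P, dot a p = dot a V → dot E V ≤ dot E p)
    (Z : Fin n → ℝ) (hZ : EdgeNeighbor P V Z) (hZa : dot a V < dot a Z)
    (hZmin : ∀ Z', EdgeNeighbor P V Z' → dot a V < dot a Z' →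
      (dot E Z - dot E V) / (dot a Z - dot a V) ≤
        (dot E Z' - dot E V) / (dot a Z' - dot a V)) :
    ∀ r ∈ Set.Icc (0 : ℝ) 1, ∀ q ∈ P,
      dot a q = dot a (V + r • (Z - V)) → dot E (V + r • (Z - V)) ≤ dot E q :=
  stmt_8_general n S hS P hP a E V hV hopt Z hZa hZmin
end

section
/- Let λ : Fin n → ℝ. The set of extreme points of the population polytope P(λ) is finite, and its cardinality N satisfies N * ∏_{x ∈ Finset.image λ Finset.univ} (card {i : Fin n | λ i = x})! = n!; that is, the number of vertices of P(λ) equals n! divided by the product of the factorials of the multiplicities of the distinct values of λ. -/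
open scoped Classical

open Finset MulAction in
/-- Auxiliary: the extreme points of the convex hull of the coordinate permutations of `lam`
are exactly the coordinate permutations of `lam`. -/
theorem stmt_11_aux_ext (n : ℕ) (lam : Fin n → ℝ) :
    Set.extremePoints ℝ (convexHull ℝ {x : Fin n → ℝ | ∃ σ : Equiv.Perm (Fin n), x = lam ∘ σ}) =
      {x : Fin n → ℝ | ∃ σ : Equiv.Perm (Fin n), x = lam ∘ σ} := by
  classical
  set S : Set (Fin n → ℝ) := {x : Fin n → ℝ | ∃ σ : Equiv.Perm (Fin n), x = lam ∘ σ} with hSdef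
  have hSfin : S.Finite := by
    have : S = Set.range (fun σ : Equiv.Perm (Fin n) => lam ∘ σ) := by
      ext x; simp [hSdef, eq_comm, Set.range]
    rw [this]; exact Set.finite_range _
  apply Set.Subset.antisymm (extremePoints_convexHull_subset)
  rintro s ⟨σ, rfl⟩
  set s : Fin n → ℝ := lam ∘ σ with hs
  -- the linear functional y ↦ ∑ s i * y i
  set f : (Fin n → ℝ) →ₗ[ℝ] ℝ :=
    { toFun := fun y => ∑ i, s i * y i
      map_add' := by intro y z; simp [mul_add, Finset.sum_add_distrib]
      map_smul' := by intro c y; simp [Finset.mul_sum, mul_left_comm] } with hf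
  have hfapp : ∀ y, f y = ∑ i, s i * y i := fun y => rfl
  have hfs : f s = ∑ i, s i ^ 2 := by rw [hfapp]; exact Finset.sum_congr rfl fun i _ => (sq (s i)).symm
  -- key computation
  have key : ∀ y ∈ S, f y = f s - (∑ i, (s i - y i) ^ 2) / 2 := by
    rintro y ⟨τ, rfl⟩
    have hy2 : ∑ i, (lam ∘ τ) i ^ 2 = ∑ i, s i ^ 2 := by
      rw [hs]
      calc ∑ i, (lam (τ i)) ^ 2 = ∑ i, (lam i) ^ 2 := Equiv.sum_comp τ (fun i => lam i ^ 2)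
        _ = ∑ i, (lam (σ i)) ^ 2 := (Equiv.sum_comp σ (fun i => lam i ^ 2)).symm
    set y : Fin n → ℝ := lam ∘ τ
    have expand : ∑ i, (s i - y i) ^ 2 = ∑ i, s i ^ 2 + ∑ i, y i ^ 2 - 2 * ∑ i, s i * y i := by
      have h : ∀ i : Fin n, (s i - y i) ^ 2 = s i ^ 2 + y i ^ 2 - 2 * (s i * y i) := fun i => by ring
      simp_rw [h, Finset.sum_sub_distrib, Finset.sum_add_distrib, Finset.mul_sum]
    rw [hfapp, hfs]
    rw [hy2] at expand
    linarith [expand]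
  have hleS : ∀ y ∈ S, f y ≤ f s := by
    intro y hy
    have := key y hy
    have h2 : (0:ℝ) ≤ ∑ i, (s i - y i) ^ 2 := Finset.sum_nonneg fun i _ => sq_nonneg _
    linarith
  have heqS : ∀ y ∈ S, f y = f s → y = s := by
    intro y hy hfy
    have h0 : ∑ i, (s i - y i) ^ 2 = 0 := by have := key y hy; linarith
    have := (Finset.sum_eq_zero_iff_of_nonneg (fun i _ => sq_nonneg (s i - y i))).mp h0
    funext i
    have := this i (Finset.mem_univ i)
    have : s i - y i = 0 := by
      have := pow_eq_zero_iff (n := 2) (by norm_num) |>.mp this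
      exact this
    linarith
  have hsS : s ∈ S := ⟨σ, rfl⟩
  have hull_le : ∀ z ∈ convexHull ℝ S, f z ≤ f s := by
    intro z hz
    have hconv : Convex ℝ {z : Fin n → ℝ | f z ≤ f s} := convex_halfSpace_le f.isLinear (f s)
    exact convexHull_min hleS hconv hz
  -- crux: any point of the hull where f attains the maximum is s
  have crux : ∀ x ∈ convexHull ℝ S, f x = f s → x = s := by
    intro x hx hfx
    rw [hSfin.convexHull_eq] at hx
    obtain ⟨w, hw0, hw1, hwx⟩ := hx
    rw [Finset.centerMass_eq_of_sum_1 _ _ hw1] at hwx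
    simp only [id_eq] at hwx
    have hfx' : f x = ∑ y ∈ hSfin.toFinset, w y * f y := by
      rw [← hwx, map_sum]
      exact Finset.sum_congr rfl fun y _ => by rw [map_smul, smul_eq_mul]
    have hzero : ∑ y ∈ hSfin.toFinset, w y * (f s - f y) = 0 := by
      have h : ∑ y ∈ hSfin.toFinset, w y * (f s - f y)
          = (∑ y ∈ hSfin.toFinset, w y) * f s - ∑ y ∈ hSfin.toFinset, w y * f y := by
        rw [Finset.sum_mul, ← Finset.sum_sub_distrib]
        exact Finset.sum_congr rfl fun y _ => by ring
      rw [h, hw1, one_mul, ← hfx', hfx, sub_self]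
    have hterm : ∀ y ∈ hSfin.toFinset, w y * (f s - f y) = 0 := by
      refine (Finset.sum_eq_zero_iff_of_nonneg fun y hy => ?_).mp hzero
      have hyS : y ∈ S := hSfin.mem_toFinset.mp hy
      exact mul_nonneg (hw0 y hyS) (by linarith [hleS y hyS])
    have hwy : ∀ y ∈ hSfin.toFinset, y ≠ s → w y = 0 := by
      intro y hy hne
      have hyS : y ∈ S := hSfin.mem_toFinset.mp hy
      rcases mul_eq_zero.mp (hterm y hy) with h | h
      · exact h
      · exact absurd (heqS y hyS (by linarith)) hne
    have hsT : s ∈ hSfin.toFinset := hSfin.mem_toFinset.mpr hsS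
    have hws : w s = 1 := by
      rw [← hw1]
      exact (Finset.sum_eq_single_of_mem s hsT fun y hy hne => hwy y hy hne).symm
    rw [← hwx]
    rw [Finset.sum_eq_single_of_mem s hsT fun y hy hne => by rw [hwy y hy hne, zero_smul]]
    rw [hws, one_smul]
  refine mem_extremePoints.mpr ⟨subset_convexHull ℝ S hsS, ?_⟩
  intro x₁ hx₁ x₂ hx₂ hseg
  obtain ⟨a, b, ha, hb, hab, hx⟩ := hseg
  have hfs' : a * f x₁ + b * f x₂ = f s := by
    rw [← hx]; simp [map_add, map_smul, smul_eq_mul]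
  have h1 := hull_le x₁ hx₁
  have h2 := hull_le x₂ hx₂
  have habs : a * f s + b * f s = f s := by rw [← add_mul, hab, one_mul]
  have hsum0 : a * (f s - f x₁) + b * (f s - f x₂) = 0 := by linear_combination habs - hfs'
  have t1 : 0 ≤ a * (f s - f x₁) := mul_nonneg ha.le (by linarith)
  have t2 : 0 ≤ b * (f s - f x₂) := mul_nonneg hb.le (by linarith)
  have e1 : f x₁ = f s := by
    have z1 : a * (f s - f x₁) = 0 := by linarith
    rcases mul_eq_zero.mp z1 with h | h
    · exact absurd h ha.ne'
    · linarith
  have e2 : f x₂ = f s := by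
    have z2 : b * (f s - f x₂) = 0 := by linarith
    rcases mul_eq_zero.mp z2 with h | h
    · exact absurd h hb.ne'
    · linarith
  exact ⟨crux x₁ hx₁ e1, crux x₂ hx₂ e2⟩

/-- The set of vertices of the population polytope of `lam` is finite, and its
cardinality `N` satisfies `N * ∏_{x value of lam} (multiplicity of x)! = n!`. -/
theorem stmt_11 (n : ℕ) (lam : Fin n → ℝ)
    (P : Set (Fin n → ℝ))
    (hP : P = convexHull ℝ {x : Fin n → ℝ | ∃ σ : Equiv.Perm (Fin n), x = lam ∘ σ}) :
    (Set.extremePoints ℝ P).Finite ∧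
      (Set.extremePoints ℝ P).ncard *
          ∏ x ∈ Finset.image lam Finset.univ,
            Nat.factorial ({i : Fin n | lam i = x}.ncard) =
        Nat.factorial n := by
  classical
  subst hP
  rw [stmt_11_aux_ext n lam]
  set S : Set (Fin n → ℝ) := {x : Fin n → ℝ | ∃ σ : Equiv.Perm (Fin n), x = lam ∘ σ} with hSdef
  have hSfin : S.Finite := by
    have : S = Set.range (fun σ : Equiv.Perm (Fin n) => lam ∘ σ) := by
      ext x; simp [hSdef, eq_comm, Set.range]
    rw [this]; exact Set.finite_range _
  refine ⟨hSfin, ?_⟩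
  -- orbit-stabilizer counting
  haveI : Fintype ((Equiv.Perm (Fin n))ᵈᵐᵃ) := Fintype.ofEquiv _ DomMulAct.mk
  have horb : MulAction.orbit ((Equiv.Perm (Fin n))ᵈᵐᵃ) lam = S := by
    ext x
    constructor
    · rintro ⟨g, rfl⟩
      exact ⟨DomMulAct.mk.symm g, rfl⟩
    · rintro ⟨τ, rfl⟩
      exact ⟨DomMulAct.mk τ, rfl⟩
  haveI : Finite (MulAction.orbit ((Equiv.Perm (Fin n))ᵈᵐᵃ) lam) :=
    Set.Finite.to_subtype (horb ▸ hSfin)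
  haveI : Fintype (MulAction.orbit ((Equiv.Perm (Fin n))ᵈᵐᵃ) lam) := Fintype.ofFinite _
  haveI : Fintype (MulAction.stabilizer ((Equiv.Perm (Fin n))ᵈᵐᵃ) lam) := Fintype.ofFinite _
  have hmain : Nat.card (MulAction.orbit ((Equiv.Perm (Fin n))ᵈᵐᵃ) lam) *
      Nat.card (MulAction.stabilizer ((Equiv.Perm (Fin n))ᵈᵐᵃ) lam) =
      Nat.card ((Equiv.Perm (Fin n))ᵈᵐᵃ) := by
    simp only [Nat.card_eq_fintype_card]
    exact MulAction.card_orbit_mul_card_stabilizer_eq_card_group _ lam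
  have hcardG : Nat.card ((Equiv.Perm (Fin n))ᵈᵐᵃ) = Nat.factorial n := by
    rw [Nat.card_congr DomMulAct.mk.symm, Nat.card_eq_fintype_card, Fintype.card_perm,
      Fintype.card_fin]
  have horb_card : S.ncard = Nat.card (MulAction.orbit ((Equiv.Perm (Fin n))ᵈᵐᵃ) lam) := by
    rw [← horb, ← Nat.card_coe_set_eq]
  have hstab_card : Nat.card (MulAction.stabilizer ((Equiv.Perm (Fin n))ᵈᵐᵃ) lam) =
      ∏ x ∈ Finset.image lam Finset.univ, Nat.factorial ({i : Fin n | lam i = x}.ncard) := by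
    have e : {g : Equiv.Perm (Fin n) // lam ∘ g = lam} ≃
        MulAction.stabilizer ((Equiv.Perm (Fin n))ᵈᵐᵃ) lam :=
      Equiv.subtypeEquiv DomMulAct.mk fun σ => by
        rw [DomMulAct.mem_stabilizer_iff, Equiv.symm_apply_apply]
    rw [← Nat.card_congr e, Nat.card_eq_fintype_card, DomMulAct.stabilizer_card']
    refine Finset.prod_congr rfl fun x _ => ?_
    congr 1
    rw [← Nat.card_coe_set_eq, Nat.card_eq_fintype_card]
    exact Fintype.card_congr (Equiv.subtypeEquivRight fun _ => Iff.rfl)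
  rw [horb_card, ← hstab_card, hmain, hcardG]
end
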